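/- arXiv:1507.02935 — 3 statements merged into one kernel-verified Lean document; each statement's English description precedes it below -/
import Mathlib

section
/- For i.i.d. Bernoulli(p) trials with 0<p<1 and any λ > ln(1/p), lim_{n→∞} (1/n) ln E[exp(λ L(n))] = λ - ln(1/p) (supercritical Laplace asymptotics). -/
/-!
With `r = e^l p > 1` one has `r^n ≤ E[e^{l L(n)}] ≤ (n + 1)^2 r^n`. The lower bound comes from the
event that all `n` trials succeed (probability `p^n`, and then `L(n) = n`). For the upper bound,
`e^{l L} ≤ ∑_{k ≤ n} e^{l k} 1{k ≤ L}` and a run of length `k` must start at one of `n + 1` places,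
so `P(k ≤ L(n)) ≤ (n + 1) p^k`; each term `(n + 1) r^k` is at most `(n + 1) r^n` since `r ≥ 1`.
The polynomial factor disappears after taking `(1/n) log`.
-/

open MeasureTheory ProbabilityTheory Filter Set
open scoped ENNReal Classical

/-- The longest run of `true`s among the first `n` trials `X 0, ..., X (n-1)`. -/
noncomputable def longestRun (X : ℕ → Bool) (n : ℕ) : ℕ :=
  (Finset.range (n + 1)).sup fun ℓ =>
    if ∃ i, i + ℓ ≤ n ∧ ∀ j < ℓ, X (i + j) = true then ℓ else 0

namespace longestRun

lemma le_self (X : ℕ → Bool) (n : ℕ) : longestRun X n ≤ n :=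
  Finset.sup_le fun ℓ hℓ => by
    rw [Finset.mem_range] at hℓ
    split <;> omega

lemma congr {X Y : ℕ → Bool} {n : ℕ} (h : ∀ i < n, X i = Y i) :
    longestRun X n = longestRun Y n := by
  refine Finset.sup_congr rfl fun ℓ _ => ?_
  have hrun : (∃ i, i + ℓ ≤ n ∧ ∀ j < ℓ, X (i + j) = true) ↔
      (∃ i, i + ℓ ≤ n ∧ ∀ j < ℓ, Y (i + j) = true) :=
    exists_congr fun i => and_congr_right fun hi =>
      forall₂_congr fun j hj => by rw [h (i + j) (by omega)]
  simp only [hrun]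

lemma eq_self_of_forall {X : ℕ → Bool} {n : ℕ} (h : ∀ j < n, X j = true) :
    longestRun X n = n := by
  refine le_antisymm (le_self X n) ?_
  have hrun : ∃ i, i + n ≤ n ∧ ∀ j < n, X (i + j) = true :=
    ⟨0, by omega, fun j hj => by simpa using h j hj⟩
  exact Finset.le_sup_of_le (Finset.self_mem_range_succ n) (by rw [if_pos hrun])

lemma exists_run_of_le {X : ℕ → Bool} {n k : ℕ} (hk : k ≤ longestRun X n) :
    ∃ i, i + k ≤ n ∧ ∀ j < k, X (i + j) = true := by
  rcases Nat.eq_zero_or_pos k with rfl | hk0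
  · exact ⟨0, by omega, fun j hj => by omega⟩
  rw [longestRun, Finset.le_sup_iff hk0] at hk
  obtain ⟨ℓ, -, hle⟩ := hk
  split_ifs at hle with hrun
  · obtain ⟨i, hi, hX⟩ := hrun
    exact ⟨i, by omega, fun j hj => hX j (by omega)⟩
  · omega

end longestRun

lemma measurable_longestRun {Ω : Type*} [MeasurableSpace Ω] {X : ℕ → Ω → Bool}
    (hX : ∀ i, Measurable (X i)) (n : ℕ) :
    Measurable fun ω => longestRun (fun i => X i ω) n := by
  -- `longestRun` only reads the first `n` trials, so it factors through the countable type
  -- `Fin n → Bool`.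
  have hfactor : (fun ω => longestRun (fun i => X i ω) n) =
      (fun v : Fin n → Bool => longestRun (fun i => if h : i < n then v ⟨i, h⟩ else false) n) ∘
        fun ω i => X i ω :=
    funext fun ω => by
      simp only [Function.comp_apply]
      exact longestRun.congr fun i hi => by simp [hi]
  rw [hfactor]
  exact (measurable_of_countable _).comp (measurable_pi_lambda _ fun i => hX i)

section BoundedNatValued

variable {Ω : Type*} [MeasurableSpace Ω] {μ : Measure Ω} {L : Ω → ℕ} {n : ℕ}

lemma integrable_comp_of_le [IsFiniteMeasure μ] (hL : Measurable L) (hLn : ∀ ω, L ω ≤ n)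
    (f : ℕ → ℝ) : Integrable (fun ω => f (L ω)) μ :=
  Integrable.of_bound (measurable_of_countable f |>.comp hL).aestronglyMeasurable
    (∑ k ∈ Finset.range (n + 1), ‖f k‖) <| ae_of_all _ fun ω =>
      Finset.single_le_sum (f := fun k => ‖f k‖) (fun _ _ => norm_nonneg _)
        (Finset.mem_range_succ_iff.mpr (hLn ω))

lemma integral_comp_le_sum_measureReal_le [IsFiniteMeasure μ] (hL : Measurable L)
    (hLn : ∀ ω, L ω ≤ n) {f : ℕ → ℝ} (hf : ∀ k, 0 ≤ f k) :
    ∫ ω, f (L ω) ∂μ ≤ ∑ k ∈ Finset.range (n + 1), μ.real {ω | k ≤ L ω} * f k := by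
  have hmeas : ∀ k, MeasurableSet {ω | k ≤ L ω} := fun k => hL (to_countable _).measurableSet
  have hpoint : ∀ ω, f (L ω) ≤
      ∑ k ∈ Finset.range (n + 1), {ω | k ≤ L ω}.indicator (fun _ => f k) ω := fun ω => by
    simpa using Finset.single_le_sum (f := fun k => {ω | k ≤ L ω}.indicator (fun _ => f k) ω)
      (fun k _ => indicator_nonneg (fun _ _ => hf k) ω) (Finset.mem_range_succ_iff.mpr (hLn ω))
  calc ∫ ω, f (L ω) ∂μ
      ≤ ∫ ω, ∑ k ∈ Finset.range (n + 1), {ω | k ≤ L ω}.indicator (fun _ => f k) ω ∂μ :=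
        integral_mono (integrable_comp_of_le hL hLn f)
          (integrable_finsetSum _ fun k _ => (integrable_const _).indicator (hmeas k)) hpoint
    _ = ∑ k ∈ Finset.range (n + 1), μ.real {ω | k ≤ L ω} * f k := by
        rw [integral_finsetSum _ fun k _ => (integrable_const _).indicator (hmeas k)]
        exact Finset.sum_congr rfl fun k _ => integral_indicator_const _ (hmeas k)

end BoundedNatValued

lemma tendsto_inv_mul_log_of_pow_le_of_le_mul_pow {I : ℕ → ℝ} {r : ℝ} (hr : 0 < r) (d : ℕ)
    (hlow : ∀ n, r ^ n ≤ I n) (hup : ∀ n, I n ≤ ((n : ℝ) + 1) ^ d * r ^ n) :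
    Tendsto (fun n : ℕ => 1 / (n : ℝ) * Real.log (I n)) atTop (nhds (Real.log r)) := by
  have hlog_div : Tendsto (fun n : ℕ => Real.log ((n : ℝ) + 1) / n) atTop (nhds 0) := by
    refine ((Real.tendsto_pow_log_div_mul_add_atTop 1 (-1) 1 one_ne_zero).comp
      (tendsto_atTop_add_const_right _ 1 tendsto_natCast_atTop_atTop)).congr fun n => ?_
    simp
  have hbound : Tendsto (fun n : ℕ => Real.log r + d * (Real.log ((n : ℝ) + 1) / n)) atTop
      (nhds (Real.log r)) := by
    simpa using tendsto_const_nhds.add (hlog_div.const_mul (d : ℝ))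
  refine tendsto_of_tendsto_of_tendsto_of_le_of_le' tendsto_const_nhds hbound ?_ ?_
  all_goals filter_upwards [eventually_gt_atTop 0] with n hn
  all_goals have hn' : (0 : ℝ) < n := by exact_mod_cast hn
  · have h := Real.log_le_log (pow_pos hr n) (hlow n)
    rw [Real.log_pow] at h
    rw [one_div, ← div_eq_inv_mul, le_div_iff₀ hn']
    linarith
  · have h := Real.log_le_log (pow_pos hr n |>.trans_le (hlow n)) (hup n)
    rw [Real.log_mul (by positivity) (by positivity), Real.log_pow, Real.log_pow] at h
    rw [one_div, ← div_eq_inv_mul, div_le_iff₀ hn']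
    calc Real.log (I n) ≤ d * Real.log ((n : ℝ) + 1) + n * Real.log r := h
      _ = (Real.log r + d * (Real.log ((n : ℝ) + 1) / n)) * n := by field_simp; ring

section Bernoulli

variable {Ω : Type*} [MeasurableSpace Ω] {μ : Measure Ω} {X : ℕ → Ω → Bool} {p : ℝ}

lemma measureReal_run_eq (hp : 0 ≤ p) (hindep : iIndepFun X μ)
    (hdist : ∀ i, μ {ω | X i ω = true} = ENNReal.ofReal p) (i k : ℕ) :
    μ.real {ω | ∀ j < k, X (i + j) ω = true} = p ^ k := by
  have hrun : {ω | ∀ j < k, X (i + j) ω = true} =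
      ⋂ m ∈ (Finset.range k).image (i + ·), X m ⁻¹' {true} := by
    ext ω
    simp
  have hinj : InjOn (i + ·) (Finset.range k) := fun a _ b _ h => by simpa using h
  rw [measureReal_def, hrun, hindep.measure_inter_preimage_eq_mul _
    fun _ _ => measurableSet_singleton true, Finset.prod_image hinj]
  simp [preimage, hdist, hp]

lemma measureReal_le_longestRun_le [IsFiniteMeasure μ] (hp : 0 ≤ p) (hindep : iIndepFun X μ)
    (hdist : ∀ i, μ {ω | X i ω = true} = ENNReal.ofReal p) (n k : ℕ) :
    μ.real {ω | k ≤ longestRun (fun i => X i ω) n} ≤ (n + 1) * p ^ k := by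
  have hcover : {ω | k ≤ longestRun (fun i => X i ω) n} ⊆
      ⋃ i ∈ Finset.range (n + 1), {ω | ∀ j < k, X (i + j) ω = true} := fun ω hω => by
    obtain ⟨i, hi, hrun⟩ := longestRun.exists_run_of_le hω
    exact mem_biUnion (Finset.mem_range.mpr (by omega)) hrun
  calc μ.real {ω | k ≤ longestRun (fun i => X i ω) n}
      ≤ ∑ i ∈ Finset.range (n + 1), μ.real {ω | ∀ j < k, X (i + j) ω = true} :=
        (measureReal_mono hcover (measure_ne_top μ _)).trans (measureReal_biUnion_finset_le _ _)
    _ = (n + 1) * p ^ k := by simp [measureReal_run_eq hp hindep hdist]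

variable [IsFiniteMeasure μ] (hp : 0 ≤ p) (hmeas : ∀ i, Measurable (X i))
  (hindep : iIndepFun X μ) (hdist : ∀ i, μ {ω | X i ω = true} = ENNReal.ofReal p)
include hp hmeas hindep hdist

lemma pow_le_integral_exp_mul_longestRun (l : ℝ) (n : ℕ) :
    (Real.exp l * p) ^ n ≤ ∫ ω, Real.exp (l * (longestRun (fun i => X i ω) n : ℝ)) ∂μ := by
  have hall : {ω | ∀ j < n, X (0 + j) ω = true} ⊆
      {ω | Real.exp (l * n) ≤ Real.exp (l * (longestRun (fun i => X i ω) n : ℝ))} :=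
    fun ω (hω : ∀ j < n, X (0 + j) ω = true) => by
      rw [mem_ofPred_eq, longestRun.eq_self_of_forall (by simpa using hω)]
  calc (Real.exp l * p) ^ n = Real.exp (l * n) * μ.real {ω | ∀ j < n, X (0 + j) ω = true} := by
        rw [measureReal_run_eq hp hindep hdist, mul_pow, ← Real.exp_nat_mul, mul_comm l]
    _ ≤ Real.exp (l * n) *
        μ.real {ω | Real.exp (l * n) ≤ Real.exp (l * (longestRun (fun i => X i ω) n : ℝ))} := by
        gcongr
        exact measure_ne_top μ _
    _ ≤ ∫ ω, Real.exp (l * (longestRun (fun i => X i ω) n : ℝ)) ∂μ :=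
        mul_meas_ge_le_integral_of_nonneg (ae_of_all _ fun _ => (Real.exp_pos _).le)
          (integrable_comp_of_le (measurable_longestRun hmeas n) (fun _ => longestRun.le_self _ n)
            fun k => Real.exp (l * k)) _

lemma integral_exp_mul_longestRun_le {l : ℝ} (hr : 1 ≤ Real.exp l * p) (n : ℕ) :
    ∫ ω, Real.exp (l * (longestRun (fun i => X i ω) n : ℝ)) ∂μ ≤
      ((n : ℝ) + 1) ^ 2 * (Real.exp l * p) ^ n := by
  have hterm : ∀ k ∈ Finset.range (n + 1),
      μ.real {ω | k ≤ longestRun (fun i => X i ω) n} * Real.exp (l * k) ≤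
        ((n : ℝ) + 1) * (Real.exp l * p) ^ n := fun k hk => by
    calc μ.real {ω | k ≤ longestRun (fun i => X i ω) n} * Real.exp (l * k)
        ≤ ((n : ℝ) + 1) * p ^ k * Real.exp (l * k) := by
          gcongr
          exact measureReal_le_longestRun_le hp hindep hdist n k
      _ = ((n : ℝ) + 1) * (Real.exp l * p) ^ k := by
          rw [mul_pow, mul_comm l, Real.exp_nat_mul]
          ring
      _ ≤ ((n : ℝ) + 1) * (Real.exp l * p) ^ n := by
          gcongr
          exact Finset.mem_range_succ_iff.mp hk
  calc ∫ ω, Real.exp (l * (longestRun (fun i => X i ω) n : ℝ)) ∂μ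
      ≤ ∑ k ∈ Finset.range (n + 1),
          μ.real {ω | k ≤ longestRun (fun i => X i ω) n} * Real.exp (l * k) :=
        integral_comp_le_sum_measureReal_le (f := fun k : ℕ => Real.exp (l * k))
          (measurable_longestRun hmeas n) (fun _ => longestRun.le_self _ n)
          fun _ => (Real.exp_pos _).le
    _ ≤ ∑ _k ∈ Finset.range (n + 1), ((n : ℝ) + 1) * (Real.exp l * p) ^ n :=
        Finset.sum_le_sum hterm
    _ = ((n : ℝ) + 1) ^ 2 * (Real.exp l * p) ^ n := by
        simp only [Finset.sum_const, Finset.card_range, nsmul_eq_mul]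
        push_cast
        ring

end Bernoulli

theorem laplace_supercritical_general
    {Ω : Type*} [MeasurableSpace Ω] (μ : Measure Ω) [IsProbabilityMeasure μ]
    (X : ℕ → Ω → Bool) (p : ℝ) (hp0 : 0 < p)
    (hmeas : ∀ i, Measurable (X i))
    (hindep : iIndepFun X μ)
    (hdist : ∀ i, μ {ω | X i ω = true} = ENNReal.ofReal p)
    (l : ℝ) (hl : Real.log (1 / p) < l) :
    Tendsto (fun n : ℕ =>
        (1 / (n : ℝ)) *
          Real.log (∫ ω, Real.exp (l * (longestRun (fun i => X i ω) n : ℝ)) ∂μ))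
      atTop (nhds (l - Real.log (1 / p))) := by
  have hr : 1 < Real.exp l * p := by
    rwa [Real.log_lt_iff_lt_exp (by positivity), div_lt_iff₀ hp0] at hl
  have hlog : Real.log (Real.exp l * p) = l - Real.log (1 / p) := by
    rw [Real.log_mul (Real.exp_ne_zero l) hp0.ne', Real.log_exp, one_div, Real.log_inv]
    ring
  rw [← hlog]
  exact tendsto_inv_mul_log_of_pow_le_of_le_mul_pow (by positivity) 2
    (pow_le_integral_exp_mul_longestRun hp0.le hmeas hindep hdist l)
    (integral_exp_mul_longestRun_le hp0.le hmeas hindep hdist hr.le)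

theorem laplace_supercritical
    {Ω : Type*} [MeasurableSpace Ω] (μ : Measure Ω) [IsProbabilityMeasure μ]
    (X : ℕ → Ω → Bool) (p : ℝ) (hp0 : 0 < p) (hp1 : p < 1)
    (hmeas : ∀ i, Measurable (X i))
    (hindep : iIndepFun X μ)
    (hdist : ∀ i, μ {ω | X i ω = true} = ENNReal.ofReal p)
    (l : ℝ) (hl : Real.log (1 / p) < l) :
    Tendsto (fun n : ℕ =>
        (1 / (n : ℝ)) *
          Real.log (∫ ω, Real.exp (l * (longestRun (fun i => X i ω) n : ℝ)) ∂μ))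
      atTop (nhds (l - Real.log (1 / p))) :=
  laplace_supercritical_general μ X p hp0 hmeas hindep hdist l hl
end

section
/- For i.i.d. Bernoulli(p) trials with 0<p<1 and every x>0, lim_{n→∞} (1/log_{1/p} n) ln P(L(n)/log_{1/p} n ≥ 1+x) = -x ln(1/p). -/
/-!
Write `r = log n / log (1/p)` and `k = ⌈(1 + x) r⌉`, so the event is `{L(n) ≥ k}`. A union bound
over the starting points of a run gives `P(L(n) ≥ k) ≤ n p^k`. For the reverse bound, split
`0, …, n-1` into `m = ⌊n/k⌋` disjoint blocks of length `k`: by Bonferroni the probability that some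
block is all successes is at least `m p^k - (m p^k)^2 ≥ m p^k / 2 ≥ n p^k / (4k)` once `n p^k ≤ 1/2`.
Since `k / r → 1 + x`, `(log (n p^k)) / r = log (1/p) (1 - k / r) → -x log (1/p)`, while
`log (4k) / r → 0`.
-/

open MeasureTheory ProbabilityTheory Filter Set
open scoped ENNReal Classical

open Topology

lemma le_longestRun_iff {b : ℕ → Bool} {n k : ℕ} (hk : 0 < k) :
    k ≤ longestRun b n ↔ ∃ i, i + k ≤ n ∧ ∀ j ∈ Finset.Ico i (i + k), b j = true := by
  have run_iff (i : ℕ) : (∀ j < k, b (i + j) = true) ↔ ∀ j ∈ Finset.Ico i (i + k), b j = true :=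
    ⟨fun h j hj => by
      obtain ⟨hij, hjk⟩ := Finset.mem_Ico.1 hj
      simpa [Nat.add_sub_cancel' hij] using h (j - i) (by omega),
     fun h j hj => h (i + j) (Finset.mem_Ico.2 ⟨by omega, by omega⟩)⟩
  simp_rw [← run_iff]
  constructor
  · rw [longestRun, Finset.le_sup_iff hk]
    rintro ⟨ℓ, -, hle⟩
    split_ifs at hle with hrun
    · obtain ⟨i, hin, hrun⟩ := hrun
      exact ⟨i, by omega, fun j hj => hrun j (by omega)⟩
    · omega
  · rintro ⟨i, hin, hrun⟩
    refine le_trans ?_ (Finset.le_sup (Finset.mem_range.2 (by omega : k < n + 1)))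
    rw [if_pos ⟨i, hin, hrun⟩]

lemma sum_measure_le_measure_biUnion_add_sum_measure_inter {Ω : Type*} [MeasurableSpace Ω]
    (μ : Measure Ω) {A : ℕ → Set Ω} (hA : ∀ t, MeasurableSet (A t)) (m : ℕ) :
    ∑ t ∈ Finset.range m, μ (A t) ≤
      μ (⋃ t ∈ Finset.range m, A t) + ∑ t ∈ Finset.range m, ∑ s ∈ Finset.range t, μ (A s ∩ A t) := by
  induction m with
  | zero => simp
  | succ m ih =>
    set U := ⋃ t ∈ Finset.range m, A t
    have hU : ⋃ t ∈ Finset.range (m + 1), A t = U ∪ A m := by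
      rw [Finset.range_add_one, Finset.set_biUnion_insert, Set.union_comm]
    have hUA : μ (U ∩ A m) ≤ ∑ s ∈ Finset.range m, μ (A s ∩ A m) := by
      rw [Set.iUnion₂_inter]
      exact measure_biUnion_finset_le _ _
    calc ∑ t ∈ Finset.range (m + 1), μ (A t)
        ≤ μ U + μ (A m) + ∑ t ∈ Finset.range m, ∑ s ∈ Finset.range t, μ (A s ∩ A t) := by
          rw [Finset.sum_range_succ, add_right_comm]
          gcongr
      _ = μ (U ∪ A m) + μ (U ∩ A m) +
            ∑ t ∈ Finset.range m, ∑ s ∈ Finset.range t, μ (A s ∩ A t) := by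
          rw [measure_union_add_inter _ (hA m)]
      _ ≤ _ := by
          rw [hU, Finset.sum_range_succ _ m, add_assoc, add_comm (∑ s ∈ Finset.range m, _)]
          gcongr

section Bernoulli

variable {Ω : Type*} [MeasurableSpace Ω] {μ : Measure Ω} {X : ℕ → Ω → Bool}

lemma measurableSet_forall_mem_eq_true (hmeas : ∀ i, Measurable (X i)) (s : Finset ℕ) :
    MeasurableSet {ω | ∀ i ∈ s, X i ω = true} := by
  simp only [Set.ofPred_forall]
  exact Finset.measurableSet_biInter s fun i _ => hmeas i (measurableSet_singleton true)

variable {q : ℝ≥0∞}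

lemma measure_forall_mem_eq_true (hindep : iIndepFun X μ)
    (hdist : ∀ i, μ {ω | X i ω = true} = q) (s : Finset ℕ) :
    μ {ω | ∀ i ∈ s, X i ω = true} = q ^ s.card := by
  have := hindep.measure_inter_preimage_eq_mul s (sets := fun _ => {true})
    fun _ _ => measurableSet_singleton true
  simpa [Set.preimage, Set.ofPred_forall, hdist] using this

lemma measure_le_longestRun_le (hindep : iIndepFun X μ)
    (hdist : ∀ i, μ {ω | X i ω = true} = q) {k : ℕ} (hk : 0 < k) (n : ℕ) :
    μ {ω | k ≤ longestRun (X · ω) n} ≤ n * q ^ k := by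
  calc μ {ω | k ≤ longestRun (X · ω) n}
      ≤ μ (⋃ i ∈ Finset.range (n + 1 - k), {ω | ∀ j ∈ Finset.Ico i (i + k), X j ω = true}) := by
        refine measure_mono fun ω hω => ?_
        obtain ⟨i, hin, hrun⟩ := (le_longestRun_iff hk).1 hω
        exact Set.mem_biUnion (Finset.mem_range.2 (by omega)) hrun
    _ ≤ ∑ _i ∈ Finset.range (n + 1 - k), q ^ k := by
        refine (measure_biUnion_finset_le _ _).trans_eq (Finset.sum_congr rfl fun i _ => ?_)
        rw [measure_forall_mem_eq_true hindep hdist, Nat.card_Ico, Nat.add_sub_cancel_left]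
    _ ≤ n * q ^ k := by
        rw [Finset.sum_const, Finset.card_range, nsmul_eq_mul]
        gcongr
        exact_mod_cast (by omega : n + 1 - k ≤ n)

lemma le_measure_le_longestRun_add (hmeas : ∀ i, Measurable (X i)) (hindep : iIndepFun X μ)
    (hdist : ∀ i, μ {ω | X i ω = true} = q) {k m n : ℕ} (hk : 0 < k) (hmn : m * k ≤ n) :
    m * q ^ k ≤ μ {ω | k ≤ longestRun (X · ω) n} + m ^ 2 * q ^ (2 * k) := by
  set A : ℕ → Set Ω := fun t => {ω | ∀ j ∈ Finset.Ico (t * k) (t * k + k), X j ω = true}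
  have hA (t : ℕ) : μ (A t) = q ^ k := by
    rw [measure_forall_mem_eq_true hindep hdist, Nat.card_Ico, Nat.add_sub_cancel_left]
  have hAA {s t : ℕ} (hst : s < t) : μ (A s ∩ A t) = q ^ (2 * k) := by
    have hdisj : Disjoint (Finset.Ico (s * k) (s * k + k)) (Finset.Ico (t * k) (t * k + k)) :=
      Finset.Ico_disjoint_Ico_consecutive _ _ _ |>.mono_right
        (Finset.Ico_subset_Ico (by nlinarith) le_rfl)
    rw [← Set.ofPred_and]
    simp_rw [← Finset.forall_mem_union]
    rw [measure_forall_mem_eq_true hindep hdist, Finset.card_union_of_disjoint hdisj,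
      Nat.card_Ico, Nat.card_Ico, Nat.add_sub_cancel_left, Nat.add_sub_cancel_left, two_mul]
  have hsub : ⋃ t ∈ Finset.range m, A t ⊆ {ω | k ≤ longestRun (X · ω) n} := by
    simp only [Set.iUnion₂_subset_iff, Finset.mem_range]
    intro t ht ω hω
    exact (le_longestRun_iff hk).2 ⟨t * k, by nlinarith, hω⟩
  calc (m : ℝ≥0∞) * q ^ k = ∑ t ∈ Finset.range m, μ (A t) := by
        simp [hA]
    _ ≤ μ (⋃ t ∈ Finset.range m, A t) +
          ∑ t ∈ Finset.range m, ∑ s ∈ Finset.range t, μ (A s ∩ A t) :=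
        sum_measure_le_measure_biUnion_add_sum_measure_inter μ
          (fun t => measurableSet_forall_mem_eq_true hmeas _) m
    _ ≤ μ {ω | k ≤ longestRun (X · ω) n} +
          ∑ _t ∈ Finset.range m, ∑ _s ∈ Finset.range m, q ^ (2 * k) := by
        gcongr with t ht
        calc ∑ s ∈ Finset.range t, μ (A s ∩ A t)
            = ∑ _s ∈ Finset.range t, q ^ (2 * k) :=
              Finset.sum_congr rfl fun s hs => hAA (Finset.mem_range.1 hs)
          _ ≤ _ := Finset.sum_le_sum_of_subset (Finset.range_subset_range.2 (Finset.mem_range.1 ht).le)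
    _ = μ {ω | k ≤ longestRun (X · ω) n} + m ^ 2 * q ^ (2 * k) := by
        simp [sq, mul_assoc]

variable {p : ℝ}

lemma toReal_measure_le_longestRun_le (hindep : iIndepFun X μ)
    (hdist : ∀ i, μ {ω | X i ω = true} = ENNReal.ofReal p) (hp : 0 ≤ p) {k : ℕ} (hk : 0 < k)
    (n : ℕ) :
    (μ {ω | k ≤ longestRun (X · ω) n}).toReal ≤ n * p ^ k := by
  refine ENNReal.toReal_le_of_le_ofReal (by positivity) ?_
  rw [ENNReal.ofReal_mul (by positivity), ENNReal.ofReal_natCast, ENNReal.ofReal_pow hp]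
  exact measure_le_longestRun_le hindep hdist hk n

lemma le_toReal_measure_le_longestRun (hmeas : ∀ i, Measurable (X i)) (hindep : iIndepFun X μ)
    (hdist : ∀ i, μ {ω | X i ω = true} = ENNReal.ofReal p) (hp : 0 ≤ p) {k n : ℕ} (hk : 0 < k)
    (hkn : k ≤ n) (hsmall : n * p ^ k ≤ 1 / 2) :
    n * p ^ k / (4 * k) ≤ (μ {ω | k ≤ longestRun (X · ω) n}).toReal := by
  have := hindep.isProbabilityMeasure
  set m := n / k
  set P := (μ {ω | k ≤ longestRun (X · ω) n}).toReal
  have hbonf : m * p ^ k ≤ P + (m * p ^ k) ^ 2 := by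
    have h := ENNReal.toReal_mono (by finiteness)
      (le_measure_le_longestRun_add hmeas hindep hdist hk (Nat.div_mul_le_self n k))
    rw [ENNReal.toReal_add (by finiteness) (by finiteness)] at h
    simp only [ENNReal.toReal_mul, ENNReal.toReal_pow, ENNReal.toReal_natCast,
      ENNReal.toReal_ofReal hp] at h
    linarith [show (m : ℝ) ^ 2 * p ^ (2 * k) = (m * p ^ k) ^ 2 by ring]
  have hmn : (m : ℝ) ≤ n := by exact_mod_cast Nat.div_le_self n k
  have hnm : (n : ℝ) / (2 * k) ≤ m := by
    have hm : 1 ≤ m := (Nat.one_le_div_iff hk).2 hkn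
    rw [div_le_iff₀ (by positivity)]
    have : (n : ℝ) < k * (m + 1) := by exact_mod_cast Nat.lt_mul_div_succ n hk
    have : (1 : ℝ) ≤ m := by exact_mod_cast hm
    nlinarith
  have hpk : 0 ≤ p ^ k := by positivity
  calc n * p ^ k / (4 * k) = n / (2 * k) * p ^ k / 2 := by field_simp; ring
    _ ≤ m * p ^ k / 2 := by gcongr
    _ ≤ P := by
        have hsmall' : m * p ^ k ≤ 1 / 2 := (mul_le_mul_of_nonneg_right hmn hpk).trans hsmall
        nlinarith [mul_nonneg (mul_nonneg m.cast_nonneg hpk) (sub_nonneg.2 hsmall')]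

end Bernoulli

lemma tendsto_mul_log_of_le_of_le {α : Type*} {l : Filter α} {w f g h : α → ℝ} {a : ℝ}
    (hw : ∀ᶠ t in l, 0 ≤ w t) (hf : ∀ᶠ t in l, 0 < f t) (hfg : ∀ᶠ t in l, f t ≤ g t)
    (hgh : ∀ᶠ t in l, g t ≤ h t) (hlf : Tendsto (fun t => w t * Real.log (f t)) l (𝓝 a))
    (hlh : Tendsto (fun t => w t * Real.log (h t)) l (𝓝 a)) :
    Tendsto (fun t => w t * Real.log (g t)) l (𝓝 a) := by
  refine tendsto_of_tendsto_of_tendsto_of_le_of_le' hlf hlh ?_ ?_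
  · filter_upwards [hw, hf, hfg] with t hw hf hfg
    exact mul_le_mul_of_nonneg_left (Real.log_le_log hf hfg) hw
  · filter_upwards [hw, hf, hfg, hgh] with t hw hf hfg hgh
    exact mul_le_mul_of_nonneg_left (Real.log_le_log (hf.trans_le hfg) hgh) hw

section Asymptotics

variable {p : ℝ} {k : ℕ → ℕ} {c : ℝ}

lemma tendsto_log_div_log_one_div_atTop (hp0 : 0 < p) (hp1 : p < 1) :
    Tendsto (fun n : ℕ => Real.log n / Real.log (1 / p)) atTop atTop :=
  (Real.tendsto_log_atTop.comp tendsto_natCast_atTop_atTop).atTop_div_const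
    (Real.log_pos (one_lt_one_div hp0 hp1))

lemma tendsto_natCast_atTop_of_tendsto_div_log (hp0 : 0 < p) (hp1 : p < 1) (hc : 0 < c)
    (hk : Tendsto (fun n : ℕ => (k n : ℝ) / (Real.log n / Real.log (1 / p))) atTop (𝓝 c)) :
    Tendsto (fun n => (k n : ℝ)) atTop atTop := by
  have hr := tendsto_log_div_log_one_div_atTop hp0 hp1
  refine (hk.pos_mul_atTop hc hr).congr' ?_
  filter_upwards [hr.eventually_gt_atTop 0] with n hn
  exact div_mul_cancel₀ _ hn.ne'

lemma tendsto_inv_mul_log_mul_pow (hp0 : 0 < p) (hp1 : p < 1)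
    (hk : Tendsto (fun n : ℕ => (k n : ℝ) / (Real.log n / Real.log (1 / p))) atTop (𝓝 c)) :
    Tendsto (fun n : ℕ => (Real.log n / Real.log (1 / p))⁻¹ * Real.log (n * p ^ k n)) atTop
      (𝓝 ((1 - c) * Real.log (1 / p))) := by
  have hL : 0 < Real.log (1 / p) := Real.log_pos (one_lt_one_div hp0 hp1)
  have hlogp : Real.log p = -Real.log (1 / p) := by rw [one_div, Real.log_inv, neg_neg]
  rw [sub_mul, one_mul]
  refine (tendsto_const_nhds.sub (hk.mul_const _)).congr' ?_
  filter_upwards [eventually_gt_atTop 1] with n hn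
  have : 0 < Real.log n := Real.log_pos (by exact_mod_cast hn)
  rw [Real.log_mul (by positivity) (by positivity), Real.log_pow, hlogp]
  field_simp
  ring

lemma tendsto_inv_mul_log_mul_pow_div (hp0 : 0 < p) (hp1 : p < 1) (hc : 0 < c)
    (hk : Tendsto (fun n : ℕ => (k n : ℝ) / (Real.log n / Real.log (1 / p))) atTop (𝓝 c)) :
    Tendsto (fun n : ℕ =>
        (Real.log n / Real.log (1 / p))⁻¹ * Real.log (n * p ^ k n / (4 * k n))) atTop
      (𝓝 ((1 - c) * Real.log (1 / p))) := by
  have hlog4 : Tendsto (fun y : ℝ => Real.log (4 * y) / y) atTop (𝓝 0) := by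
    have := (tendsto_const_nhds (x := Real.log 4)).div_atTop tendsto_id |>.add
      Real.isLittleO_log_id_atTop.tendsto_div_nhds_zero
    rw [add_zero] at this
    refine this.congr' ?_
    filter_upwards [eventually_gt_atTop 0] with y hy
    rw [Real.log_mul (by norm_num) hy.ne', add_div]
    rfl
  have hkinf := tendsto_natCast_atTop_of_tendsto_div_log hp0 hp1 hc hk
  have herr := (hlog4.comp hkinf).mul hk
  rw [zero_mul] at herr
  have := (tendsto_inv_mul_log_mul_pow hp0 hp1 hk).sub herr
  rw [sub_zero] at this
  refine this.congr' ?_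
  filter_upwards [eventually_gt_atTop 1, hkinf.eventually_gt_atTop 0] with n hn hkn
  have : 0 < Real.log n := Real.log_pos (by exact_mod_cast hn)
  have : 0 < Real.log (1 / p) := Real.log_pos (one_lt_one_div hp0 hp1)
  simp only [Function.comp_apply]
  rw [Real.log_div (x := n * p ^ k n) (by positivity) (by positivity)]
  field_simp

lemma eventually_le_self_of_tendsto_div_log (hp0 : 0 < p) (hp1 : p < 1)
    (hk : Tendsto (fun n : ℕ => (k n : ℝ) / (Real.log n / Real.log (1 / p))) atTop (𝓝 c)) :
    ∀ᶠ n in atTop, k n ≤ n := by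
  have hr : Tendsto (fun n : ℕ => Real.log n / Real.log (1 / p) / n) atTop (𝓝 0) := by
    have := (Real.isLittleO_log_id_atTop.tendsto_div_nhds_zero.comp
      tendsto_natCast_atTop_atTop).div_const (Real.log (1 / p))
    rw [zero_div] at this
    refine this.congr fun n => ?_
    simp only [Function.comp_apply, id]
    ring
  have := (hk.mul hr).eventually_lt_const (by rw [mul_zero]; exact one_pos)
  filter_upwards [this, eventually_gt_atTop 1] with n h hn
  have : 0 < Real.log n := Real.log_pos (by exact_mod_cast hn)
  have : 0 < Real.log (1 / p) := Real.log_pos (one_lt_one_div hp0 hp1)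
  rw [div_mul_div_cancel₀ (by positivity), div_lt_one (by positivity)] at h
  exact_mod_cast h.le

lemma eventually_mul_pow_le_half (hp0 : 0 < p) (hp1 : p < 1) (hc : 1 < c)
    (hk : Tendsto (fun n : ℕ => (k n : ℝ) / (Real.log n / Real.log (1 / p))) atTop (𝓝 c)) :
    ∀ᶠ n in atTop, n * p ^ k n ≤ 1 / 2 := by
  have hr := tendsto_log_div_log_one_div_atTop hp0 hp1
  have hneg : (1 - c) * Real.log (1 / p) < 0 :=
    mul_neg_of_neg_of_pos (by linarith) (Real.log_pos (one_lt_one_div hp0 hp1))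
  have hbot := hr.atTop_mul_neg hneg (tendsto_inv_mul_log_mul_pow hp0 hp1 hk)
  filter_upwards [hbot.eventually_le_atBot (Real.log (1 / 2)), hr.eventually_gt_atTop 0,
    eventually_gt_atTop 0] with n h hrn hn
  rw [mul_inv_cancel_left₀ hrn.ne'] at h
  exact (Real.log_le_log_iff (by positivity) (by norm_num)).1 h

end Asymptotics

theorem longestRun_upper_tail_near_nominal_general
    {Ω : Type*} [MeasurableSpace Ω] (μ : Measure Ω)
    (X : ℕ → Ω → Bool) (p : ℝ) (hp0 : 0 < p) (hp1 : p < 1)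
    (hmeas : ∀ i, Measurable (X i))
    (hindep : iIndepFun X μ)
    (hdist : ∀ i, μ {ω | X i ω = true} = ENNReal.ofReal p)
    (x : ℝ) (hx : 0 < x) :
    Tendsto (fun n : ℕ =>
        (Real.log n / Real.log (1 / p))⁻¹ *
          Real.log ((μ {ω | 1 + x ≤
            (longestRun (fun i => X i ω) n : ℝ) / (Real.log n / Real.log (1 / p))}).toReal))
      atTop (nhds (-(x * Real.log (1 / p)))) := by
  set r : ℕ → ℝ := fun n => Real.log n / Real.log (1 / p)
  set k : ℕ → ℕ := fun n => ⌈(1 + x) * r n⌉₊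
  have hr : Tendsto r atTop atTop := tendsto_log_div_log_one_div_atTop hp0 hp1
  have hk : Tendsto (fun n => (k n : ℝ) / r n) atTop (𝓝 (1 + x)) :=
    (tendsto_nat_ceil_mul_div_atTop (by linarith)).comp hr
  have hevent : ∀ᶠ n : ℕ in atTop,
      {ω | 1 + x ≤ (longestRun (X · ω) n : ℝ) / (Real.log n / Real.log (1 / p))} =
        {ω | k n ≤ longestRun (X · ω) n} := by
    filter_upwards [hr.eventually_gt_atTop 0] with n hrn
    ext ω
    simp only [Set.mem_ofPred_eq, le_div_iff₀ hrn, Nat.ceil_le, k, r]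
  have hgood : ∀ᶠ n in atTop, 0 < r n ∧ 0 < k n ∧ k n ≤ n ∧ n * p ^ k n ≤ 1 / 2 := by
    filter_upwards [hr.eventually_gt_atTop 0,
      (tendsto_natCast_atTop_of_tendsto_div_log hp0 hp1 (by linarith) hk).eventually_gt_atTop 0,
      eventually_le_self_of_tendsto_div_log hp0 hp1 hk,
      eventually_mul_pow_le_half hp0 hp1 (by linarith) hk] with n hrn hkpos hkn hsmall
    exact ⟨hrn, by exact_mod_cast hkpos, hkn, hsmall⟩
  rw [show -(x * Real.log (1 / p)) = (1 - (1 + x)) * Real.log (1 / p) by ring]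
  refine tendsto_mul_log_of_le_of_le (f := fun n => n * p ^ k n / (4 * k n))
    (h := fun n => n * p ^ k n) ?_ ?_ ?_ ?_
    (tendsto_inv_mul_log_mul_pow_div hp0 hp1 (by linarith) hk)
    (tendsto_inv_mul_log_mul_pow hp0 hp1 hk)
  · filter_upwards [hgood] with n hn using inv_nonneg.2 hn.1.le
  · filter_upwards [hgood] with n ⟨_, hkpos, hkn, _⟩
    have : 0 < n := hkpos.trans_le hkn
    positivity
  · filter_upwards [hgood, hevent] with n ⟨_, hkpos, hkn, hsmall⟩ hev
    rw [hev]
    exact le_toReal_measure_le_longestRun hmeas hindep hdist hp0.le hkpos hkn hsmall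
  · filter_upwards [hgood, hevent] with n ⟨_, hkpos, _⟩ hev
    rw [hev]
    exact toReal_measure_le_longestRun_le hindep hdist hp0.le hkpos n

theorem longestRun_upper_tail_near_nominal
    {Ω : Type*} [MeasurableSpace Ω] (μ : Measure Ω) [IsProbabilityMeasure μ]
    (X : ℕ → Ω → Bool) (p : ℝ) (hp0 : 0 < p) (hp1 : p < 1)
    (hmeas : ∀ i, Measurable (X i))
    (hindep : iIndepFun X μ)
    (hdist : ∀ i, μ {ω | X i ω = true} = ENNReal.ofReal p)
    (x : ℝ) (hx : 0 < x) :
    Tendsto (fun n : ℕ =>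
        (Real.log n / Real.log (1 / p))⁻¹ *
          Real.log ((μ {ω | 1 + x ≤
            (longestRun (fun i => X i ω) n : ℝ) / (Real.log n / Real.log (1 / p))}).toReal))
      atTop (nhds (-(x * Real.log (1 / p)))) :=
  longestRun_upper_tail_near_nominal_general μ X p hp0 hp1 hmeas hindep hdist x hx
end

section
/- For i.i.d. Bernoulli(p) trials with 0<p<1, for integers m > k ≥ 1, P(L(m-1) < k ≤ L(m)) = q p^k · P(L(m-k-1) < k), and consequently P(L(m) < k) ≤ (1 - q p^k) P(L(m-1) < k). -/
/-!
With trials indexed from `0` and `m = t + k + 1`, the `m`-th trial completes the first run of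
`k` successes exactly when trial `t` fails, trials `t + 1, …, t + k` succeed, and the first `t`
trials contain no such run. The block event has probability `q p ^ k` and depends only on trials
in `[t, t + k]`, the other only on trials in `[0, t)`, so independence gives the recursion. For the
inequality, `P(L(m-1) < k) = P(L(m) < k) + q p ^ k P(L(t) < k)` and `P(L(t) < k) ≥ P(L(m-1) < k)`
since `L` is monotone.
-/

open MeasureTheory ProbabilityTheory Filter Set
open scoped ENNReal Classical

def HasRun (X : ℕ → Bool) (k n : ℕ) : Prop :=
  ∃ i, i + k ≤ n ∧ ∀ j < k, X (i + j) = true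

theorem HasRun.mono {X : ℕ → Bool} {k n n' : ℕ} (h : HasRun X k n) (hn : n ≤ n') :
    HasRun X k n' :=
  let ⟨i, hle, hrun⟩ := h
  ⟨i, hle.trans hn, hrun⟩

theorem le_longestRun_iff_s14 {X : ℕ → Bool} {k n : ℕ} (hk : 0 < k) :
    k ≤ longestRun X n ↔ HasRun X k n := by
  constructor
  · intro h
    obtain ⟨ℓ, -, hℓ⟩ := (Finset.le_sup_iff hk).1 h
    split_ifs at hℓ with hrun
    · obtain ⟨i, hle, hrun⟩ := hrun
      exact ⟨i, by omega, fun j hj => hrun j (by omega)⟩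
    · omega
  · intro hrun
    have hkn : k ∈ Finset.range (n + 1) := by
      obtain ⟨i, hle, -⟩ := hrun
      exact Finset.mem_range.2 (by omega)
    refine le_trans ?_ (Finset.le_sup hkn)
    exact (if_pos hrun).ge

theorem longestRun_lt_iff {X : ℕ → Bool} {k n : ℕ} (hk : 0 < k) :
    longestRun X n < k ↔ ¬HasRun X k n := by
  rw [← not_le, le_longestRun_iff_s14 hk]

theorem longestRun_mono (X : ℕ → Bool) : Monotone (longestRun X) := by
  intro n n' hn
  refine le_trans (Finset.sup_mono_fun fun ℓ _ => ?_) (Finset.sup_mono (by simpa using hn))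
  split_ifs with h h'
  · exact le_rfl
  · obtain ⟨i, hle, hrun⟩ := h
    exact absurd ⟨i, hle.trans hn, hrun⟩ h'
  · exact Nat.zero_le _
  · exact le_rfl

theorem longestRun_congr {X Y : ℕ → Bool} {n : ℕ} (h : ∀ i < n, X i = Y i) :
    longestRun X n = longestRun Y n := by
  refine Finset.sup_congr rfl fun ℓ _ => if_congr ?_ rfl rfl
  refine exists_congr fun i => and_congr_right fun hle => forall₂_congr fun j hj => ?_
  rw [h (i + j) (by omega)]

/-- `decide (t < i)` is the pattern `false, true, …, true` on the block `t, …, t + k`. -/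
theorem firstRun_completed_iff {X : ℕ → Bool} {k t : ℕ} (hk : 0 < k) :
    (¬HasRun X k (t + k) ∧ HasRun X k (t + k + 1)) ↔
      ¬HasRun X k t ∧ ∀ i ∈ Finset.Icc t (t + k), X i = decide (t < i) := by
  simp only [Finset.mem_Icc]
  constructor
  · rintro ⟨hnone, i, hle, hrun⟩
    obtain rfl : i = t + 1 := by
      by_contra hne
      exact hnone ⟨i, by omega, hrun⟩
    have hXt : X t = false := by
      by_contra hXt
      refine hnone ⟨t, le_rfl, fun j hj => ?_⟩
      rcases j with _ | j
      · simpa using hXt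
      · simpa [Nat.add_right_comm, Nat.add_assoc] using hrun j (by omega)
    refine ⟨fun hrun' => hnone (hrun'.mono (by omega)), fun i hi => ?_⟩
    rcases hi.1.eq_or_lt with rfl | hti
    · simpa using hXt
    · simpa [hti] using hrun (i - (t + 1)) (by omega)
  · rintro ⟨hnone, hblock⟩
    have hrun : ∀ j < k, X (t + 1 + j) = true := fun j hj => by
      simpa [Nat.add_assoc] using hblock (t + 1 + j) (by omega)
    refine ⟨?_, t + 1, by omega, hrun⟩
    rintro ⟨i, hle, hrun⟩
    rcases le_or_gt (i + k) t with hit | hit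
    · exact hnone ⟨i, hit, hrun⟩
    · have := hrun (t - i) (by omega)
      rw [Nat.add_sub_cancel' (by omega), hblock t (by omega)] at this
      simp at this

theorem ENNReal.le_one_sub_mul_of_add_mul_eq {a b c d : ℝ≥0∞} (h : a + c * d = b) (hbd : b ≤ d)
    (hb : b ≠ ∞) : a ≤ (1 - c) * b := by
  have hcb : a + c * b ≤ b :=
    calc a + c * b ≤ a + c * d := by gcongr
      _ = b := h
  have hcb_ne : c * b ≠ ∞ := ne_top_of_le_ne_top hb (le_add_self.trans hcb)
  rw [ENNReal.sub_mul fun _ _ => hb, one_mul]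
  exact ENNReal.le_sub_of_add_le_right hcb_ne hcb

theorem exists_setOf_longestRun_lt_eq_preimage {Ω : Type*} (X : ℕ → Ω → Bool) (n k : ℕ) :
    ∃ A : Set (Finset.range n → Bool),
      {ω | longestRun (fun i => X i ω) n < k} = (fun ω (i : Finset.range n) => X i ω) ⁻¹' A := by
  refine ⟨{f | longestRun (fun i => if h : i ∈ Finset.range n then f ⟨i, h⟩ else false) n < k},
    Set.ext fun ω => Iff.of_eq <| congrArg (· < k) <|
      longestRun_congr fun i hi => by simp [Finset.mem_range.2 hi]⟩

theorem ProbabilityTheory.iIndepFun.measure_preimage_inter_iInter_preimage {Ω ι β : Type*}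
    [MeasurableSpace Ω] [MeasurableSpace β] {μ : Measure Ω} {X : ι → Ω → β} (hindep : iIndepFun X μ)
    (hmeas : ∀ i, Measurable (X i)) {S T : Finset ι} (hST : Disjoint S T) {A : Set (S → β)}
    (hA : MeasurableSet A) {E : ι → Set β} (hE : ∀ i ∈ T, MeasurableSet (E i)) :
    μ ((fun ω (i : S) => X i ω) ⁻¹' A ∩ ⋂ i ∈ T, X i ⁻¹' E i)
      = μ ((fun ω (i : S) => X i ω) ⁻¹' A) * ∏ i ∈ T, μ (X i ⁻¹' E i) := by
  have hT : ⋂ i ∈ T, X i ⁻¹' E i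
      = (fun ω (i : T) => X i ω) ⁻¹' Set.univ.pi fun i => E i := by
    ext ω
    simp
  rw [← hindep.measure_inter_preimage_eq_mul T hE, hT,
    (hindep.indepFun_finset S T hST hmeas).measure_inter_preimage_eq_mul _ _ hA
      (MeasurableSet.univ_pi fun i => hE i i.2)]

section Bernoulli

variable {Ω : Type*} [MeasurableSpace Ω] {μ : Measure Ω} {X : ℕ → Ω → Bool}

theorem measurableSet_longestRun_lt (hmeas : ∀ i, Measurable (X i)) (n k : ℕ) :
    MeasurableSet {ω | longestRun (fun i => X i ω) n < k} := by
  obtain ⟨A, hA⟩ := exists_setOf_longestRun_lt_eq_preimage X n k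
  rw [hA]
  exact measurable_pi_lambda (fun ω (i : Finset.range n) => X i ω) (fun i => hmeas i)
    MeasurableSet.of_discrete

theorem measure_longestRun_lt_eq_add (hmeas : ∀ i, Measurable (X i)) (n k : ℕ) :
    μ {ω | longestRun (fun i => X i ω) n < k}
      = μ {ω | longestRun (fun i => X i ω) (n + 1) < k}
        + μ {ω | longestRun (fun i => X i ω) n < k ∧ k ≤ longestRun (fun i => X i ω) (n + 1)} := by
  have hsplit : {ω | longestRun (fun i => X i ω) n < k}
      = {ω | longestRun (fun i => X i ω) (n + 1) < k}
        ∪ {ω | longestRun (fun i => X i ω) n < k ∧ k ≤ longestRun (fun i => X i ω) (n + 1)} := by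
    ext ω
    have := longestRun_mono (fun i => X i ω) (n.le_add_right 1)
    simp only [mem_ofPred_eq, mem_union]
    omega
  rw [hsplit, measure_union' _ (measurableSet_longestRun_lt hmeas _ _)]
  exact disjoint_left.2 fun ω h h' => (not_le.2 h) h'.2

variable [IsProbabilityMeasure μ] {p : ℝ}

theorem measure_preimage_false (hp0 : 0 ≤ p) {i : ℕ} (hmeas : Measurable (X i))
    (hdist : μ {ω | X i ω = true} = ENNReal.ofReal p) :
    μ (X i ⁻¹' {false}) = ENNReal.ofReal (1 - p) := by
  have hcompl : X i ⁻¹' {false} = {ω | X i ω = true}ᶜ := by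
    ext ω
    simp
  rw [hcompl, prob_compl_eq_one_sub (s := {ω | X i ω = true}) (hmeas (measurableSet_singleton _)),
    hdist, ENNReal.ofReal_sub 1 hp0, ENNReal.ofReal_one]

theorem prod_measure_preimage_decide_lt (hp0 : 0 ≤ p) (hp1 : p ≤ 1)
    (hmeas : ∀ i, Measurable (X i)) (hdist : ∀ i, μ {ω | X i ω = true} = ENNReal.ofReal p)
    (t k : ℕ) :
    ∏ i ∈ Finset.Icc t (t + k), μ (X i ⁻¹' {decide (t < i)})
      = ENNReal.ofReal ((1 - p) * p ^ k) := by
  have htrue : ∀ i ∈ Finset.Icc (t + 1) (t + k), μ (X i ⁻¹' {decide (t < i)}) = ENNReal.ofReal p :=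
    fun i hi => by
      rw [decide_eq_true (by simp at hi; omega), ← hdist i]
      rfl
  rw [← Finset.insert_Icc_add_one_left_eq_Icc (by omega), Finset.prod_insert (by simp),
    Finset.prod_congr rfl htrue, decide_eq_false (lt_irrefl t),
    measure_preimage_false hp0 (hmeas t) (hdist t), Finset.prod_const, Nat.card_Icc,
    Nat.add_sub_add_right, Nat.add_sub_cancel_left, ENNReal.ofReal_mul (by linarith),
    ENNReal.ofReal_pow hp0]

theorem measure_firstRun_completed (hp0 : 0 ≤ p) (hp1 : p ≤ 1) (hmeas : ∀ i, Measurable (X i))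
    (hindep : iIndepFun X μ) (hdist : ∀ i, μ {ω | X i ω = true} = ENNReal.ofReal p)
    {k : ℕ} (hk : 0 < k) (t : ℕ) :
    μ {ω | longestRun (fun i => X i ω) (t + k) < k ∧ k ≤ longestRun (fun i => X i ω) (t + k + 1)}
      = ENNReal.ofReal ((1 - p) * p ^ k) * μ {ω | longestRun (fun i => X i ω) t < k} := by
  have hevent : {ω | longestRun (fun i => X i ω) (t + k) < k ∧
        k ≤ longestRun (fun i => X i ω) (t + k + 1)}
      = {ω | longestRun (fun i => X i ω) t < k}
        ∩ ⋂ i ∈ Finset.Icc t (t + k), X i ⁻¹' {decide (t < i)} := by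
    ext ω
    simp only [mem_ofPred_eq, longestRun_lt_iff hk, le_longestRun_iff_s14 hk, firstRun_completed_iff hk,
      mem_inter_iff, mem_iInter, mem_preimage, mem_singleton_iff]
  have hdisj : Disjoint (Finset.range t) (Finset.Icc t (t + k)) :=
    Finset.disjoint_left.2 fun i hi hi' => by simp at hi hi'; omega
  obtain ⟨A, hA⟩ := exists_setOf_longestRun_lt_eq_preimage X t k
  rw [hevent, hA, hindep.measure_preimage_inter_iInter_preimage hmeas hdisj
      (A := A) MeasurableSet.of_discrete fun _ _ => measurableSet_singleton _,
    prod_measure_preimage_decide_lt hp0 hp1 hmeas hdist, mul_comm]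

end Bernoulli

theorem longestRun_recursion
    {Ω : Type*} [MeasurableSpace Ω] (μ : Measure Ω) [IsProbabilityMeasure μ]
    (X : ℕ → Ω → Bool) (p : ℝ) (hp0 : 0 < p) (hp1 : p < 1)
    (hmeas : ∀ i, Measurable (X i))
    (hindep : iIndepFun X μ)
    (hdist : ∀ i, μ {ω | X i ω = true} = ENNReal.ofReal p)
    (m k : ℕ) (hk : 1 ≤ k) (hkm : k < m) :
    μ {ω | longestRun (fun i => X i ω) (m - 1) < k ∧ k ≤ longestRun (fun i => X i ω) m}
        = ENNReal.ofReal ((1 - p) * p ^ k) *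
            μ {ω | longestRun (fun i => X i ω) (m - k - 1) < k} ∧
      μ {ω | longestRun (fun i => X i ω) m < k}
        ≤ ENNReal.ofReal (1 - (1 - p) * p ^ k) *
            μ {ω | longestRun (fun i => X i ω) (m - 1) < k} := by
  obtain ⟨t, rfl⟩ : ∃ t, m = t + k + 1 := ⟨m - k - 1, by omega⟩
  rw [show t + k + 1 - 1 = t + k by omega, show t + k + 1 - k - 1 = t by omega]
  have hfirst := measure_firstRun_completed hp0.le hp1.le hmeas hindep hdist hk t
  refine ⟨hfirst, ?_⟩
  have hq : 0 ≤ (1 - p) * p ^ k := mul_nonneg (by linarith) (by positivity)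
  rw [ENNReal.ofReal_sub 1 hq, ENNReal.ofReal_one]
  refine ENNReal.le_one_sub_mul_of_add_mul_eq
    (d := μ {ω | longestRun (fun i => X i ω) t < k}) ?_ ?_ (measure_ne_top _ _)
  · rw [← hfirst, ← measure_longestRun_lt_eq_add hmeas]
  · exact measure_mono fun ω h => (longestRun_mono _ (by omega)).trans_lt h
end
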